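/- Under the assumptions of the previous statement, additionally assuming λ_K(A) ≠ 0 (the K-th largest in absolute value eigenvalue of A is nonzero), it holds that ‖L̂⁻¹ - O_Pᵀ L⁻¹ O_P‖ ≤ (2√(2K)(‖A‖+‖P‖)/λ_K(P) + 1)·‖A - P‖ / (λ_K(A)·λ_K(P)). -/

import Mathlib

/-!
Put `M = (U O)ᵀ P (U O) = Oᵀ L O`, so that `M⁻¹ = Oᵀ L⁻¹ O`, and `L̂ = Ûᵀ A Û`. The resolvent
identity `L̂⁻¹ - M⁻¹ = L̂⁻¹ (M - L̂) M⁻¹` reduces the claim to bounding `‖M - L̂‖`. Expanding both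
compressions around `Û - U O` gives `‖M - L̂‖ ≤ ‖A - P‖ + (‖A‖ + ‖P‖) ‖Û - U O‖`, and the spectral
norm of `Û - U O` is at most its Frobenius norm, which the Davis–Kahan bound controls.
-/

open scoped BigOperators
open scoped Matrix

noncomputable def frobNorm {m n : Type*} [Fintype m] [Fintype n] (M : Matrix m n ℝ) : ℝ :=
  Real.sqrt (∑ i, ∑ j, (M i j)^2)

noncomputable def specNorm {m n : Type*} [Fintype m] [Fintype n] [DecidableEq n] (M : Matrix m n ℝ) : ℝ :=
  ‖(Matrix.toEuclideanLin M).toContinuousLinearMap‖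

noncomputable def lamMin {m : Type*} [Fintype m] [DecidableEq m] (M : Matrix m m ℝ) : ℝ :=
  ⨅ (v : {v : EuclideanSpace ℝ m // ‖v‖ = 1}), @inner ℝ _ _ v.1 (Matrix.toEuclideanLin M v.1)

noncomputable def lamMax {m : Type*} [Fintype m] [DecidableEq m] (M : Matrix m m ℝ) : ℝ :=
  ⨆ (v : {v : EuclideanSpace ℝ m // ‖v‖ = 1}), @inner ℝ _ _ v.1 (Matrix.toEuclideanLin M v.1)

noncomputable def sMin {m n : Type*} [Fintype m] [Fintype n] [DecidableEq n] (M : Matrix m n ℝ) : ℝ :=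
  Real.sqrt (lamMin (Mᵀ * M))

noncomputable def sMax {m n : Type*} [Fintype m] [Fintype n] [DecidableEq n] (M : Matrix m n ℝ) : ℝ :=
  Real.sqrt (lamMax (Mᵀ * M))

namespace Matrix

variable {m n k : Type*} [Fintype n]

lemma transpose_mul_mul_sub_transpose_mul_mul {R : Type*} [CommRing R]
    (V W : Matrix n k R) (X Y : Matrix n n R) :
    Vᵀ * Y * V - Wᵀ * X * W = Vᵀ * (Y - X) * W - Vᵀ * Y * (W - V) - (W - V)ᵀ * X * W := by
  simp only [transpose_sub, Matrix.mul_sub, Matrix.sub_mul]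
  abel

variable [Fintype m] [Fintype k]

section Frobenius

attribute [local instance] Matrix.frobeniusNormedAddCommGroup

lemma frobNorm_eq_frobenius_norm (M : Matrix m n ℝ) : frobNorm M = ‖M‖ := by
  simp only [frobNorm, frobenius_norm_def, Real.sqrt_eq_rpow, Real.norm_eq_abs,
    Real.rpow_two, sq_abs]

lemma norm_toLp_mulVec_le_frobNorm (M : Matrix m n ℝ) (x : n → ℝ) :
    ‖WithLp.toLp 2 (M *ᵥ x)‖ ≤ frobNorm M * ‖WithLp.toLp 2 x‖ := by
  rw [frobNorm_eq_frobenius_norm, ← frobenius_norm_replicateCol (ι := Unit),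
    ← frobenius_norm_replicateCol (ι := Unit), replicateCol_mulVec]
  exact frobenius_norm_mul _ _

end Frobenius

open scoped Norms.L2Operator

variable [DecidableEq n] [DecidableEq k]

lemma specNorm_eq_l2_opNorm (M : Matrix m n ℝ) : specNorm M = ‖M‖ := rfl

lemma l2_opNorm_le_frobNorm (M : Matrix m n ℝ) : ‖M‖ ≤ frobNorm M :=
  ContinuousLinearMap.opNorm_le_bound _ (Real.sqrt_nonneg _) fun x =>
    norm_toLp_mulVec_le_frobNorm M x

lemma l2_opNorm_transpose [DecidableEq m] (M : Matrix m n ℝ) : ‖Mᵀ‖ = ‖M‖ := by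
  rw [← conjTranspose_eq_transpose_of_trivial, l2_opNorm_conjTranspose]

lemma l2_opNorm_one_le : ‖(1 : Matrix n n ℝ)‖ ≤ 1 := by
  rw [l2_opNorm_def]
  convert ContinuousLinearMap.norm_id_le (𝕜 := ℝ) (E := EuclideanSpace ℝ n)
  ext x : 1
  simp

lemma l2_opNorm_le_one_of_transpose_mul_self (V : Matrix m n ℝ) (hV : Vᵀ * V = 1) :
    ‖V‖ ≤ 1 := by
  have h : ‖V‖ * ‖V‖ ≤ 1 := by
    rw [← l2_opNorm_conjTranspose_mul_self, conjTranspose_eq_transpose_of_trivial, hV]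
    exact l2_opNorm_one_le
  nlinarith [norm_nonneg V]

lemma l2_opNorm_mul_mul_le {p : Type*} [Fintype p] [DecidableEq p]
    (X : Matrix m n ℝ) (Y : Matrix n k ℝ) (Z : Matrix k p ℝ) :
    ‖X * Y * Z‖ ≤ ‖X‖ * ‖Y‖ * ‖Z‖ :=
  (l2_opNorm_mul _ _).trans (by gcongr; exact l2_opNorm_mul _ _)

lemma l2_opNorm_transpose_mul_mul_le {V : Matrix n k ℝ} (hV : ‖V‖ ≤ 1) (X : Matrix n n ℝ) :
    ‖Vᵀ * X * V‖ ≤ ‖X‖ := by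
  calc ‖Vᵀ * X * V‖ ≤ ‖V‖ * ‖X‖ * ‖V‖ := by
        simpa only [l2_opNorm_transpose] using l2_opNorm_mul_mul_le Vᵀ X V
    _ ≤ 1 * ‖X‖ * 1 := by gcongr
    _ = ‖X‖ := by ring

lemma l2_opNorm_compression_sub_le {V W : Matrix n k ℝ} (hV : ‖V‖ ≤ 1) (hW : ‖W‖ ≤ 1)
    (X Y : Matrix n n ℝ) :
    ‖Vᵀ * Y * V - Wᵀ * X * W‖ ≤ ‖Y - X‖ + (‖Y‖ + ‖X‖) * ‖W - V‖ := by
  rw [transpose_mul_mul_sub_transpose_mul_mul]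
  have h₁ : ‖Vᵀ * (Y - X) * W‖ ≤ ‖Y - X‖ := by
    calc _ ≤ ‖V‖ * ‖Y - X‖ * ‖W‖ := by
          simpa only [l2_opNorm_transpose] using l2_opNorm_mul_mul_le Vᵀ (Y - X) W
      _ ≤ 1 * ‖Y - X‖ * 1 := by gcongr
      _ = ‖Y - X‖ := by ring
  have h₂ : ‖Vᵀ * Y * (W - V)‖ ≤ ‖Y‖ * ‖W - V‖ := by
    calc _ ≤ ‖V‖ * ‖Y‖ * ‖W - V‖ := by
          simpa only [l2_opNorm_transpose] using l2_opNorm_mul_mul_le Vᵀ Y (W - V)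
      _ ≤ 1 * ‖Y‖ * ‖W - V‖ := by gcongr
      _ = ‖Y‖ * ‖W - V‖ := by ring
  have h₃ : ‖(W - V)ᵀ * X * W‖ ≤ ‖X‖ * ‖W - V‖ := by
    calc _ ≤ ‖W - V‖ * ‖X‖ * ‖W‖ := by
          simpa only [l2_opNorm_transpose] using l2_opNorm_mul_mul_le (W - V)ᵀ X W
      _ ≤ ‖W - V‖ * ‖X‖ * 1 := by gcongr
      _ = ‖X‖ * ‖W - V‖ := by ring
  linarith [norm_sub_le (Vᵀ * (Y - X) * W - Vᵀ * Y * (W - V)) ((W - V)ᵀ * X * W),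
    norm_sub_le (Vᵀ * (Y - X) * W) (Vᵀ * Y * (W - V))]

lemma isUnit_det_of_l2_opNorm_inv_pos {M : Matrix n n ℝ} (h : 0 < ‖M⁻¹‖) : IsUnit M.det := by
  by_contra hM
  simp [nonsing_inv_apply_not_isUnit M hM] at h

lemma nonsing_inv_sub_nonsing_inv {M N : Matrix n n ℝ} (hM : IsUnit M.det)
    (hN : IsUnit N.det) :
    M⁻¹ - N⁻¹ = M⁻¹ * (N - M) * N⁻¹ := by
  simp only [nonsing_inv_eq_ringInverse]
  exact Ring.inverse_sub_inverse (by simp only [isUnit_iff_isUnit_det, hM, hN])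

lemma det_transpose_mul_mul_of_transpose_mul_self {O : Matrix n n ℝ} (hO : Oᵀ * O = 1)
    (M : Matrix n n ℝ) : (Oᵀ * M * O).det = M.det := by
  have hdetO : O.det * O.det = 1 := by
    simpa only [det_mul, det_transpose, det_one] using congrArg det hO
  rw [det_mul, det_mul, det_transpose]
  linear_combination M.det * hdetO

lemma inv_transpose_mul_mul_of_transpose_mul_self {O : Matrix n n ℝ} (hO : Oᵀ * O = 1)
    (M : Matrix n n ℝ) : (Oᵀ * M * O)⁻¹ = Oᵀ * M⁻¹ * O := by
  rw [mul_inv_rev, mul_inv_rev, inv_eq_left_inv hO, inv_eq_left_inv (mul_eq_one_comm.mp hO),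
    Matrix.mul_assoc]

end Matrix

open Matrix
open scoped Matrix.Norms.L2Operator

theorem stmt_3_general {n K : ℕ}
    (A P : Matrix (Fin n) (Fin n) ℝ)
    (U Uh : Matrix (Fin n) (Fin K) ℝ) (L Lh : Matrix (Fin K) (Fin K) ℝ)
    (hU : Uᵀ * U = 1) (hUh : Uhᵀ * Uh = 1)
    (hPdecomp : P = U * L * Uᵀ) (hAeig : A * Uh = Uh * Lh)
    (lK : ℝ) (hlK : 0 < lK) (hlKval : specNorm L⁻¹ = 1 / lK)
    (lKA : ℝ) (hlKA : 0 < lKA) (hlKAval : specNorm Lh⁻¹ = 1 / lKA)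
    (O : Matrix (Fin K) (Fin K) ℝ) (hO : Oᵀ * O = 1)
    (hDK : frobNorm (Uh - U * O) ≤ 2 * Real.sqrt (2 * K) * specNorm (A - P) / lK) :
    specNorm (Lh⁻¹ - Oᵀ * L⁻¹ * O)
      ≤ (2 * Real.sqrt (2 * K) * (specNorm A + specNorm P) / lK + 1) * specNorm (A - P)
          / (lKA * lK) := by
  simp only [specNorm_eq_l2_opNorm] at hlKval hlKAval hDK ⊢
  have hL : IsUnit L.det := isUnit_det_of_l2_opNorm_inv_pos (by rw [hlKval]; positivity)
  have hLh : IsUnit Lh.det := isUnit_det_of_l2_opNorm_inv_pos (by rw [hlKAval]; positivity)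
  have hLcomp : L = Uᵀ * P * U := by
    rw [hPdecomp, Matrix.mul_assoc, Matrix.mul_assoc, hU, Matrix.mul_one, ← Matrix.mul_assoc, hU,
      Matrix.one_mul]
  have hLhcomp : Lh = Uhᵀ * A * Uh := by
    rw [Matrix.mul_assoc, hAeig, ← Matrix.mul_assoc, hUh, Matrix.one_mul]
  set M := (U * O)ᵀ * P * (U * O) with hM
  have hML : M = Oᵀ * L * O := by simp only [hM, hLcomp, transpose_mul, Matrix.mul_assoc]
  have hMinv : Oᵀ * L⁻¹ * O = M⁻¹ := by rw [hML, inv_transpose_mul_mul_of_transpose_mul_self hO]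
  have hMunit : IsUnit M.det := by rwa [hML, det_transpose_mul_mul_of_transpose_mul_self hO]
  have hUO : ‖U * O‖ ≤ 1 := l2_opNorm_le_one_of_transpose_mul_self _ (by
    rw [transpose_mul, Matrix.mul_assoc, ← Matrix.mul_assoc Uᵀ, hU, Matrix.one_mul, hO])
  have hMLh : ‖M - Lh‖ ≤ ‖A - P‖ + (‖A‖ + ‖P‖) * ‖Uh - U * O‖ := by
    have := l2_opNorm_compression_sub_le hUO (l2_opNorm_le_one_of_transpose_mul_self _ hUh) A P
    rwa [← hLhcomp, norm_sub_rev P, add_comm ‖P‖] at this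
  have hMinv_le : ‖M⁻¹‖ ≤ 1 / lK := by
    rw [← hMinv, ← hlKval]
    exact l2_opNorm_transpose_mul_mul_le (l2_opNorm_le_one_of_transpose_mul_self _ hO) _
  calc ‖Lh⁻¹ - Oᵀ * L⁻¹ * O‖ = ‖Lh⁻¹ * (M - Lh) * M⁻¹‖ := by
        rw [hMinv, nonsing_inv_sub_nonsing_inv hLh hMunit]
    _ ≤ ‖Lh⁻¹‖ * ‖M - Lh‖ * ‖M⁻¹‖ := l2_opNorm_mul_mul_le _ _ _
    _ ≤ 1 / lKA * (‖A - P‖ + (‖A‖ + ‖P‖) * (2 * Real.sqrt (2 * K) * ‖A - P‖ / lK)) * (1 / lK) := by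
        rw [hlKAval]
        gcongr ?_ * ?_ * ?_
        exact hMLh.trans (by gcongr; exact (l2_opNorm_le_frobNorm _).trans hDK)
    _ = _ := by field_simp; ring

theorem stmt_3 {n K : ℕ}
    (A P : Matrix (Fin n) (Fin n) ℝ) (hA : Aᵀ = A) (hP : Pᵀ = P) (hrank : P.rank = K)
    (U Uh : Matrix (Fin n) (Fin K) ℝ) (L Lh : Matrix (Fin K) (Fin K) ℝ)
    (hLdiag : L.IsDiag) (hLhdiag : Lh.IsDiag)
    (hU : Uᵀ * U = 1) (hUh : Uhᵀ * Uh = 1)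
    (hPdecomp : P = U * L * Uᵀ) (hAeig : A * Uh = Uh * Lh)
    (hbest : specNorm (Uh * Lh * Uhᵀ - U * L * Uᵀ) ≤ specNorm (A - P))
    (lK : ℝ) (hlK : 0 < lK) (hlKval : specNorm L⁻¹ = 1 / lK)
    (lKA : ℝ) (hlKA : 0 < lKA) (hlKAval : specNorm Lh⁻¹ = 1 / lKA)
    (O : Matrix (Fin K) (Fin K) ℝ) (hO : Oᵀ * O = 1)
    (hDK : frobNorm (Uh - U * O) ≤ 2 * Real.sqrt (2 * K) * specNorm (A - P) / lK) :
    specNorm (Lh⁻¹ - Oᵀ * L⁻¹ * O)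
      ≤ (2 * Real.sqrt (2 * K) * (specNorm A + specNorm P) / lK + 1) * specNorm (A - P)
          / (lKA * lK) :=
  stmt_3_general A P U Uh L Lh hU hUh hPdecomp hAeig lK hlK hlKval lKA hlKA hlKAval O hO hDK
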